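/- Let X = Aℤ be a full shift (more generally a 1-step irreducible SFT), p a prime, and f : X → 𝔽_p a continuous map depending only on coordinates x_{[-N,N]}. Define σ_f : X × 𝔽_p → X × 𝔽_p by σ_f(x, c) = (σ_X(x), c + f(x)). If there exists a periodic point z ∈ X of least period k with ∑_{i=0}^{k-1} f(σ_X^i(z)) ≠ 0 in 𝔽_p, then the skew-product system (X × 𝔽_p, σ_f) is topologically transitive, and it is topologically conjugate to an irreducible shift of finite type. -/

import Mathlib

open Function Set

/-- The shift map on bi-infinite sequences. -/
def shiftMap (A : Type*) : (ℤ → A) → (ℤ → A) := fun x i => x (i + 1)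

/-- A (two-sided) subshift over an alphabet `A`: a closed, shift-invariant subset of the
full shift `A^ℤ` on which the shift is onto. -/
structure Subshift (A : Type*) [TopologicalSpace A] where
  carrier : Set (ℤ → A)
  isClosed' : IsClosed carrier
  shift_mem' : ∀ x ∈ carrier, shiftMap A x ∈ carrier
  shift_surjOn' : ∀ x ∈ carrier, ∃ y ∈ carrier, shiftMap A y = x

/-- The shift map restricted to a subshift. -/
def Subshift.σ {A : Type*} [TopologicalSpace A] (X : Subshift A) : X.carrier → X.carrier :=
  fun x => ⟨shiftMap A x.1, X.shift_mem' x.1 x.2⟩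

/-- `X` is a shift of finite type: membership is determined by a finite-window rule. -/
def Subshift.IsSFT {A : Type*} [TopologicalSpace A] (X : Subshift A) : Prop :=
  ∃ (n : ℕ) (W : Set (Fin n → A)),
    X.carrier = {x | ∀ i : ℤ, (fun k : Fin n => x (i + (k.val : ℤ))) ∈ W}

/-- Irreducibility (= topological transitivity) of a subshift. -/
def Subshift.Irreducible {A : Type*} [TopologicalSpace A] (X : Subshift A) : Prop :=
  ∀ U V : Set X.carrier, IsOpen U → IsOpen V → U.Nonempty → V.Nonempty →
    ∃ n : ℕ, (X.σ^[n] '' U ∩ V).Nonempty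

/-- A factor map between subshifts: a continuous, shift-commuting surjection. -/
structure IsFactorMap {A B : Type*} [TopologicalSpace A] [TopologicalSpace B]
    (Y : Subshift B) (X : Subshift A) (ϖ : Y.carrier → X.carrier) : Prop where
  continuous : Continuous ϖ
  commutes : ∀ y, ϖ (Y.σ y) = X.σ (ϖ y)
  surjective : Function.Surjective ϖ

/-- An unramified (constant-to-one) factor map of degree `d`. -/
def IsUnramified {A B : Type*} [TopologicalSpace A] [TopologicalSpace B]
    (Y : Subshift B) (X : Subshift A) (ϖ : Y.carrier → X.carrier) (d : ℕ) : Prop :=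
  IsFactorMap Y X ϖ ∧ ∀ x : X.carrier, (ϖ ⁻¹' {x}).Finite ∧ (ϖ ⁻¹' {x}).ncard = d

/-- The relative automorphism group `Aut(Y/X, ϖ)`: shift-commuting self-homeomorphisms of `Y`
over `X`. -/
def relAut {A B : Type*} [TopologicalSpace A] [TopologicalSpace B]
    (Y : Subshift B) (X : Subshift A) (ϖ : Y.carrier → X.carrier) :
    Subgroup (Equiv.Perm Y.carrier) where
  carrier := {φ | Continuous φ ∧ Continuous (φ⁻¹ : Equiv.Perm Y.carrier) ∧
    (∀ y, φ (Y.σ y) = Y.σ (φ y)) ∧ ∀ y, ϖ (φ y) = ϖ y}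
  one_mem' := ⟨by simpa using continuous_id, by simpa using continuous_id,
    fun _ => by simp, fun _ => by simp⟩
  mul_mem' := by
    rintro φ ψ ⟨hc, hci, hcomm, hrel⟩ ⟨hc', hci', hcomm', hrel'⟩
    refine ⟨?_, ?_, fun y => ?_, fun y => ?_⟩
    · simpa [Equiv.Perm.coe_mul] using hc.comp hc'
    · simpa [mul_inv_rev, Equiv.Perm.coe_mul] using hci'.comp hci
    · simp [Equiv.Perm.mul_apply, hcomm, hcomm']
    · simp [Equiv.Perm.mul_apply, hrel, hrel']
  inv_mem' := by
    rintro φ ⟨hc, hci, hcomm, hrel⟩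
    refine ⟨hci, by simpa using hc, fun y => φ.injective ?_, fun y => ?_⟩
    · have e : ∀ w, φ (φ⁻¹ w) = w := fun w => by
        rw [← Equiv.Perm.mul_apply, mul_inv_cancel, Equiv.Perm.one_apply]
      simp [hcomm, e]
    · have e : φ (φ⁻¹ y) = y := by
        rw [← Equiv.Perm.mul_apply, mul_inv_cancel, Equiv.Perm.one_apply]
      conv_rhs => rw [← e]
      exact (hrel _).symm

/-- A pointed Galois factor of degree `d` over a pointed subshift `(X, x₀)`. -/
def IsPointedGaloisFactor {A B : Type*} [TopologicalSpace A] [TopologicalSpace B]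
    (Y : Subshift B) (y₀ : Y.carrier) (X : Subshift A) (x₀ : X.carrier)
    (ϖ : Y.carrier → X.carrier) (d : ℕ) : Prop :=
  Y.IsSFT ∧ Y.Irreducible ∧ ϖ y₀ = x₀ ∧ IsUnramified Y X ϖ d ∧
    Nat.card (relAut Y X ϖ) = d

/-- The full shift on an alphabet `A`. -/
def fullShift (A : Type*) [TopologicalSpace A] : Subshift A where
  carrier := Set.univ
  isClosed' := isClosed_univ
  shift_mem' := fun _ _ => Set.mem_univ _
  shift_surjOn' := fun x _ => ⟨fun i => x (i - 1), Set.mem_univ _, by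
    funext i; simp [shiftMap]⟩

namespace SkewAux
variable {A : Type*} [TopologicalSpace A]

lemma shift_iter (X : Subshift A) (n : ℕ) (x : X.carrier) (i : ℤ) :
    ((X.σ^[n]) x).1 i = x.1 (i + n) := by
  induction n generalizing x i with
  | zero => simp
  | succ n ih =>
    rw [Function.iterate_succ_apply]
    have := ih (X.σ x) i
    rw [this]
    show x.1 (i + n + 1) = _
    congr 1; push_cast; ring

/-- inverse shift on a subshift -/
def σinv (X : Subshift A) : X.carrier → X.carrier := fun x =>
  ⟨fun i => x.1 (i - 1), by
    obtain ⟨y, hy, hyx⟩ := X.shift_surjOn' x.1 x.2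
    have : (fun i : ℤ => x.1 (i - 1)) = y := by
      funext i
      have := congrFun hyx (i - 1)
      simpa [shiftMap] using this.symm
    rw [this]; exact hy⟩

/-- the shift as a permutation of the subshift -/
def σE (X : Subshift A) : Equiv.Perm X.carrier where
  toFun := X.σ
  invFun := σinv X
  left_inv := fun x => by
    apply Subtype.ext; funext i
    show x.1 (i - 1 + 1) = x.1 i
    congr 1; ring
  right_inv := fun x => by
    apply Subtype.ext; funext i
    show x.1 (i + 1 - 1) = x.1 i
    congr 1; ring

lemma σE_apply (X : Subshift A) (x : X.carrier) : σE X x = X.σ x := rfl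

lemma zpow_coord (X : Subshift A) (n : ℤ) (x : X.carrier) (i : ℤ) :
    ((σE X ^ n) x).1 i = x.1 (i + n) := by
  induction n using Int.induction_on generalizing x i with
  | zero => simp
  | succ n ih =>
    have h1 : (σE X ^ ((n : ℤ) + 1)) x = (σE X ^ (n : ℤ)) (σE X x) := by
      rw [zpow_add_one]; rfl
    rw [h1, ih]
    show x.1 (i + n + 1) = _
    congr 1; push_cast; ring
  | pred n ih =>
    have h1 : (σE X ^ (-(n : ℤ) - 1)) x = (σE X ^ (-(n : ℤ))) ((σE X)⁻¹ x) := by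
      rw [zpow_sub_one]; rfl
    rw [h1, ih]
    show x.1 (i + -(n:ℤ) - 1) = _
    congr 1; push_cast; ring

lemma zpow_natCast_eq_iter (X : Subshift A) (n : ℕ) (x : X.carrier) :
    (σE X ^ (n : ℤ)) x = X.σ^[n] x := by
  apply Subtype.ext; funext i
  rw [zpow_coord, shift_iter]

end SkewAux
namespace SkewAux
variable {A : Type*} [TopologicalSpace A] [DiscreteTopology A]

lemma continuous_of_coord (X : Subshift A) (g : X.carrier → X.carrier) (φ : ℤ → ℤ)
    (h : ∀ x i, (g x).1 i = x.1 (φ i)) : Continuous g := by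
  rw [continuous_induced_rng]
  have : (Subtype.val ∘ g) = fun x : X.carrier => fun i => x.1 (φ i) := by
    funext x i; exact h x i
  rw [this]
  exact continuous_pi fun i => (continuous_apply (φ i)).comp continuous_subtype_val

lemma continuous_σE_zpow (X : Subshift A) (n : ℤ) : Continuous fun x => (σE X ^ n) x :=
  continuous_of_coord X _ (fun i => i + n) (fun x i => zpow_coord X n x i)

variable {B : Type*} [TopologicalSpace B] [DiscreteTopology B]

lemma continuous_local (X : Subshift A) (N : ℕ) (f : X.carrier → B)
    (hf : ∀ x y : X.carrier, (∀ i : ℤ, |i| ≤ (N : ℤ) → x.1 i = y.1 i) → f x = f y) :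
    Continuous f := by
  have hlc : IsLocallyConstant f := by
    rw [IsLocallyConstant.iff_exists_open]
    intro x
    refine ⟨{y : X.carrier | ∀ i : ℤ, |i| ≤ (N:ℤ) → y.1 i = x.1 i}, ?_, fun i hi => rfl, ?_⟩
    · have heq : {y : X.carrier | ∀ i : ℤ, |i| ≤ (N:ℤ) → y.1 i = x.1 i}
          = ⋂ i ∈ Finset.Icc (-(N:ℤ)) (N:ℤ), {y : X.carrier | y.1 i = x.1 i} := by
        ext y
        simp only [Set.mem_setOf_eq, Set.mem_iInter, Finset.mem_Icc]
        constructor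
        · intro h i hi; exact h i (abs_le.mpr hi)
        · intro h i hi; exact h i (abs_le.mp hi)
      rw [heq]
      apply isOpen_biInter_finset
      intro i _
      have : {y : X.carrier | y.1 i = x.1 i} = (fun y : X.carrier => y.1 i) ⁻¹' {x.1 i} := rfl
      rw [this]
      exact (isOpen_discrete _).preimage ((continuous_apply i).comp continuous_subtype_val)
    · intro y hy
      exact hf y x hy
  exact hlc.continuous

lemma cyl_subset_open (X : Subshift A) {C : Type*} [TopologicalSpace C]
    {U : Set (X.carrier × C)} (hU : IsOpen U) {x : X.carrier} {c : C}
    (hxc : (x, c) ∈ U) :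
    ∃ M : ℕ, ∀ y : X.carrier, (∀ i : ℤ, |i| ≤ (M : ℤ) → y.1 i = x.1 i) → (y, c) ∈ U := by
  have hcont : Continuous fun y : X.carrier => (y, c) := by fun_prop
  have hopen : IsOpen ((fun y : X.carrier => (y, c)) ⁻¹' U) := hU.preimage hcont
  rw [isOpen_induced_iff] at hopen
  obtain ⟨t, ht, hteq⟩ := hopen
  have hxt : x.1 ∈ t := by
    have : x ∈ (fun y : X.carrier => (y, c)) ⁻¹' U := hxc
    rw [← hteq] at this; exact this
  rw [isOpen_pi_iff] at ht
  obtain ⟨I, u, hu, hsub⟩ := ht x.1 hxt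
  refine ⟨I.sup fun i => i.natAbs, fun y hy => ?_⟩
  have : y.1 ∈ t := by
    apply hsub
    intro a ha
    have : y.1 a = x.1 a := by
      apply hy
      have h1 : a.natAbs ≤ I.sup fun i => i.natAbs :=
        Finset.le_sup (f := fun i : ℤ => i.natAbs) ha
      rw [a.abs_eq_natAbs]
      exact_mod_cast h1
    rw [this]
    exact (hu a ha).2
  have : y ∈ (fun y : X.carrier => (y, c)) ⁻¹' U := by rw [← hteq]; exact this
  exact this

end SkewAux
namespace SkewAux
variable {A : Type*} [TopologicalSpace A] [DiscreteTopology A]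

lemma skew_iterate (X : Subshift A) {p : ℕ} (f : X.carrier → ZMod p) (n : ℕ)
    (x : X.carrier) (c : ZMod p) :
    (fun q : X.carrier × ZMod p => (X.σ q.1, q.2 + f q.1))^[n] (x, c) =
      (X.σ^[n] x, c + ∑ j ∈ Finset.range n, f (X.σ^[j] x)) := by
  induction n with
  | zero => simp
  | succ n ih =>
    rw [Function.iterate_succ_apply', ih]
    simp [Finset.sum_range_succ, Function.iterate_succ_apply', add_assoc]

lemma glue (X : Subshift A) (hXirr : X.Irreducible) {W : Set (A × A)}
    (hW : X.carrier = {x | ∀ i : ℤ, (x i, x (i + 1)) ∈ W})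
    (x y : X.carrier) :
    ∃ (n : ℕ) (v : X.carrier),
      (∀ i : ℤ, i ≤ 0 → v.1 i = x.1 i) ∧ (∀ i : ℤ, (n : ℤ) ≤ i → v.1 i = y.1 (i - n)) := by
  have pair : ∀ u : X.carrier, ∀ i : ℤ, (u.1 i, u.1 (i + 1)) ∈ W := by
    intro u i
    have := (Set.ext_iff.mp hW u.1).mp u.2
    exact this i
  have hUo : IsOpen {w : X.carrier | w.1 0 = x.1 0} := by
    have : {w : X.carrier | w.1 0 = x.1 0} = (fun w : X.carrier => w.1 0) ⁻¹' {x.1 0} := rfl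
    rw [this]
    exact (isOpen_discrete _).preimage ((continuous_apply 0).comp continuous_subtype_val)
  have hVo : IsOpen {w : X.carrier | w.1 0 = y.1 0} := by
    have : {w : X.carrier | w.1 0 = y.1 0} = (fun w : X.carrier => w.1 0) ⁻¹' {y.1 0} := rfl
    rw [this]
    exact (isOpen_discrete _).preimage ((continuous_apply 0).comp continuous_subtype_val)
  obtain ⟨n, q, ⟨w, hwU, hwq⟩, hqV⟩ := hXirr _ _ hUo hVo ⟨x, rfl⟩ ⟨y, rfl⟩
  have hw0 : w.1 0 = x.1 0 := hwU
  have hwn : w.1 (n : ℤ) = y.1 0 := by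
    have : q.1 0 = y.1 0 := hqV
    rw [← hwq] at this
    rw [shift_iter] at this
    simpa using this
  set v : ℤ → A := fun i => if i ≤ 0 then x.1 i else if i ≤ (n : ℤ) then w.1 i else y.1 (i - n)
    with hv
  have hv1 : ∀ i : ℤ, i ≤ 0 → v i = x.1 i := fun i hi => by simp [hv, hi]
  have hv2 : ∀ i : ℤ, 0 ≤ i → i ≤ (n : ℤ) → v i = w.1 i := by
    intro i h0 hn
    simp only [hv]
    split_ifs with ha hb
    · have : i = 0 := le_antisymm ha h0
      subst this; exact hw0.symm
    · rfl
  have hv3 : ∀ i : ℤ, (n : ℤ) ≤ i → v i = y.1 (i - n) := by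
    intro i hi
    simp only [hv]
    split_ifs with ha hb
    · have hi0 : i = 0 := by omega
      have hn0 : (n : ℤ) = 0 := by omega
      rw [hi0, hn0, sub_zero, ← hwn, hn0, hw0]
    · have hin : i = (n : ℤ) := le_antisymm hb hi
      rw [hin, hwn, sub_self]
    · rfl
  have hmem : v ∈ X.carrier := by
    rw [hW]
    intro i
    rcases le_or_gt (i + 1) 0 with h | h
    · rw [hv1 i (by omega), hv1 (i+1) (by omega)]; exact pair x i
    · rcases le_or_gt (i + 1) (n : ℤ) with h2 | h2
      · rw [hv2 i (by omega) (by omega), hv2 (i+1) (by omega) (by omega)]; exact pair w i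
      · have hni : (n : ℤ) ≤ i := by omega
        rw [hv3 i hni, hv3 (i+1) (by omega)]
        have e1 : (i + 1 : ℤ) - n = (i - n) + 1 := by ring
        rw [e1]
        exact pair y (i - n)
  exact ⟨n, ⟨v, hmem⟩, hv1, hv3⟩

end SkewAux
namespace SkewAux
variable {A : Type*} [TopologicalSpace A] [DiscreteTopology A]

lemma z_per (X : Subshift A) {z : X.carrier} {k : ℕ} (hz : X.σ^[k] z = z) (i : ℤ) :
    z.1 (i + k) = z.1 i := by
  conv_rhs => rw [← hz]
  rw [shift_iter]

lemma z_per_mul (X : Subshift A) {z : X.carrier} {k : ℕ} (hz : X.σ^[k] z = z)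
    (m : ℕ) (i : ℤ) : z.1 (i + m * k) = z.1 i := by
  induction m with
  | zero => simp
  | succ m ih =>
    have : (i : ℤ) + (m + 1 : ℕ) * k = (i + m * k) + k := by push_cast; ring
    rw [this, z_per X hz, ih]

variable {p : ℕ}

lemma F_per (X : Subshift A) (f : X.carrier → ZMod p) {z : X.carrier} {k : ℕ}
    (hz : X.σ^[k] z = z) (t : ℤ) :
    f ((σE X ^ (t + k)) z) = f ((σE X ^ t) z) := by
  have : (σE X ^ (t + (k : ℤ))) z = (σE X ^ t) ((σE X ^ (k : ℤ)) z) := by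
    rw [zpow_add]; rfl
  rw [this, zpow_natCast_eq_iter, hz]

lemma sum_consec (X : Subshift A) (f : X.carrier → ZMod p) {z : X.carrier} {k : ℕ}
    (hz : X.σ^[k] z = z) (t : ℤ) :
    ∑ j ∈ Finset.range k, f ((σE X ^ (t + j)) z)
      = ∑ i ∈ Finset.range k, f (X.σ^[i] z) := by
  set G : ℤ → ZMod p := fun t => ∑ j ∈ Finset.range k, f ((σE X ^ (t + j)) z) with hG
  have hstep : ∀ t : ℤ, G (t + 1) = G t := by
    intro t
    have h1 : ∑ j ∈ Finset.range (k + 1), f ((σE X ^ (t + j)) z)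
        = G t + f ((σE X ^ (t + k)) z) := by
      rw [Finset.sum_range_succ]
    have h2 : ∑ j ∈ Finset.range (k + 1), f ((σE X ^ (t + j)) z)
        = G (t + 1) + f ((σE X ^ t) z) := by
      rw [Finset.sum_range_succ']
      congr 1
      · apply Finset.sum_congr rfl
        intro j _
        congr 2
        push_cast; ring
      · congr 2; push_cast; ring
    have h3 := F_per X f hz t
    rw [h1, h3] at h2
    have := add_right_cancel h2.symm
    exact this
  have hall : ∀ t : ℤ, G t = G 0 := by
    intro t
    induction t using Int.induction_on with
    | zero => rfl
    | succ n ih => rw [hstep, ih]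
    | pred n ih => rw [← ih, ← hstep (-(n:ℤ) - 1)]; norm_num
  have h0 : G 0 = ∑ i ∈ Finset.range k, f (X.σ^[i] z) := by
    apply Finset.sum_congr rfl
    intro j _
    rw [zero_add, zpow_natCast_eq_iter]
  rw [← h0]; exact hall t

end SkewAux
namespace SkewAux
variable {A : Type*} [TopologicalSpace A] [DiscreteTopology A]

lemma main_trans (X : Subshift A) (hXirr : X.Irreducible) {W : Set (A × A)}
    (hW : X.carrier = {x | ∀ i : ℤ, (x i, x (i + 1)) ∈ W})
    {p : ℕ} (hp : p.Prime) [TopologicalSpace (ZMod p)] (N : ℕ) (f : X.carrier → ZMod p)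
    (hf : ∀ x y : X.carrier, (∀ i : ℤ, |i| ≤ (N : ℤ) → x.1 i = y.1 i) → f x = f y)
    (z : X.carrier) (k : ℕ) (hk : 1 ≤ k) (hz : X.σ^[k] z = z)
    (hsum : ∑ i ∈ Finset.range k, f (X.σ^[i] z) ≠ 0) :
    ∀ U V : Set (X.carrier × ZMod p), IsOpen U → IsOpen V → U.Nonempty → V.Nonempty →
      ∃ n : ℕ,
        (((fun q : X.carrier × ZMod p => (X.σ q.1, q.2 + f q.1))^[n] '' U) ∩ V).Nonempty := by
  haveI : Fact p.Prime := ⟨hp⟩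
  intro U V hUo hVo hUne hVne
  obtain ⟨⟨xU, cU⟩, hU0⟩ := hUne
  obtain ⟨⟨xV, cV⟩, hV0⟩ := hVne
  obtain ⟨M₁, hM₁⟩ := cyl_subset_open X hUo hU0
  obtain ⟨M₂, hM₂⟩ := cyl_subset_open X hVo hV0
  set M : ℕ := max (max M₁ M₂) N with hM
  have hMN : N ≤ M := le_max_right _ _
  have hMU : ∀ y : X.carrier, (∀ i : ℤ, |i| ≤ (M : ℤ) → y.1 i = xU.1 i) → (y, cU) ∈ U := by
    intro y hy
    apply hM₁
    intro i hi
    apply hy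
    have : M₁ ≤ M := le_trans (le_max_left _ _) (le_max_left _ _)
    omega
  have hMV : ∀ y : X.carrier, (∀ i : ℤ, |i| ≤ (M : ℤ) → y.1 i = xV.1 i) → (y, cV) ∈ V := by
    intro y hy
    apply hM₂
    intro i hi
    apply hy
    have : M₂ ≤ M := le_trans (le_max_right _ _) (le_max_left _ _)
    omega
  obtain ⟨n₁, v₁, h11, h12⟩ := glue X hXirr hW ((σE X ^ (M : ℤ)) xU) z
  obtain ⟨n₂, v₂, h21, h22⟩ := glue X hXirr hW z ((σE X ^ (-(M : ℤ))) xV)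
  have h11' : ∀ i : ℤ, i ≤ 0 → v₁.1 i = xU.1 (i + M) := by
    intro i hi; rw [h11 i hi, zpow_coord]
  have h22' : ∀ i : ℤ, (n₂ : ℤ) ≤ i → v₂.1 i = xV.1 (i - n₂ - M) := by
    intro i hi
    rw [h22 i hi, zpow_coord, show (i - (n₂ : ℤ) + -(M : ℤ)) = i - n₂ - M from by ring]
  have hzper : ∀ i : ℤ, z.1 (i + (k : ℤ)) = z.1 i := z_per X hz
  -- the spliced family of sequences, parameterized by the z-block length L
  set vs : ℕ → ℤ → A := fun L i =>
    if i ≤ (M : ℤ) + n₁ + L then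
      (if i ≤ (M : ℤ) + n₁ then v₁.1 (i - M) else z.1 (i - M - n₁))
    else v₂.1 (i - M - n₁ - L) with hvs
  have A0 : ∀ (L : ℕ) (i : ℤ), i ≤ (M : ℤ) + n₁ → vs L i = v₁.1 (i - M) := by
    intro L i hi
    simp only [hvs]
    rw [if_pos (by omega), if_pos hi]
  have A2 : ∀ (L : ℕ) (i : ℤ), (M : ℤ) + n₁ ≤ i → i ≤ (M : ℤ) + n₁ + L →
      vs L i = z.1 (i - M - n₁) := by
    intro L i h1 h2
    simp only [hvs]
    rw [if_pos h2]
    by_cases hc : i ≤ (M : ℤ) + n₁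
    · rw [if_pos hc]
      have hi : i = (M : ℤ) + n₁ := le_antisymm hc h1
      subst hi
      have e1 : ((M : ℤ) + n₁ - M) = (n₁ : ℤ) := by ring
      have e2 : ((M : ℤ) + n₁ - M - n₁) = 0 := by ring
      rw [e2, e1, h12 n₁ le_rfl, sub_self]
    · rw [if_neg hc]
  have A3 : ∀ (L : ℕ), z.1 ((L : ℤ)) = z.1 0 → ∀ i : ℤ, (M : ℤ) + n₁ + L ≤ i →
      vs L i = v₂.1 (i - M - n₁ - L) := by
    intro L hL i hi
    simp only [hvs]
    by_cases hc : i ≤ (M : ℤ) + n₁ + L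
    · have hi2 : i = (M : ℤ) + n₁ + L := le_antisymm hc hi
      subst hi2
      rw [if_pos le_rfl]
      have e0 : ((M : ℤ) + n₁ + L - M - n₁ - L) = 0 := by ring
      rw [e0]
      by_cases hc2 : (M : ℤ) + n₁ + L ≤ (M : ℤ) + n₁
      · rw [if_pos hc2]
        have e1 : ((M : ℤ) + n₁ + L - M) = (n₁ : ℤ) := by omega
        rw [e1, h12 n₁ le_rfl, sub_self, h21 0 le_rfl]
      · rw [if_neg hc2]
        have e1 : ((M : ℤ) + n₁ + L - M - n₁) = (L : ℤ) := by ring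
        rw [e1, hL, h21 0 le_rfl]
    · rw [if_neg hc]
  have memb : ∀ (L : ℕ), z.1 ((L : ℤ)) = z.1 0 → vs L ∈ X.carrier := by
    intro L hL
    rw [hW]
    intro i
    have pairx : ∀ u : X.carrier, ∀ j : ℤ, (u.1 j, u.1 (j + 1)) ∈ W := by
      intro u j
      exact (Set.ext_iff.mp hW u.1).mp u.2 j
    rcases le_or_gt (i + 1) ((M : ℤ) + n₁) with h | h
    · rw [A0 L i (by omega), A0 L (i+1) h, show (i + 1 - (M : ℤ)) = (i - M) + 1 by ring]
      exact pairx v₁ _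
    · rcases le_or_gt (i + 1) ((M : ℤ) + n₁ + L) with h2 | h2
      · rw [A2 L i (by omega) (by omega), A2 L (i+1) (by omega) h2,
          show (i + 1 - (M : ℤ) - n₁) = (i - M - n₁) + 1 by ring]
        exact pairx z _
      · rw [A3 L hL i (by omega), A3 L hL (i+1) (by omega),
          show (i + 1 - (M : ℤ) - n₁ - L) = (i - M - n₁ - L) + 1 by ring]
        exact pairx v₂ _
  -- R-relations between different L
  have R1 : ∀ (L L' : ℕ), L ≤ L' → ∀ i : ℤ, i ≤ (M : ℤ) + n₁ + L →
      vs L' i = vs L i := by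
    intro L L' hLL i hi
    simp only [hvs]
    rw [if_pos (show i ≤ (M : ℤ) + n₁ + (L' : ℤ) by omega),
      if_pos (show i ≤ (M : ℤ) + n₁ + (L : ℤ) by omega)]
  have R2 : ∀ (L : ℕ), z.1 ((L : ℤ)) = z.1 0 → z.1 ((L + k : ℕ) : ℤ) = z.1 0 →
      ∀ i : ℤ, (M : ℤ) + n₁ ≤ i → vs (L + k) (i + k) = vs L i := by
    intro L hL hLk i hi
    rcases le_or_gt i ((M : ℤ) + n₁ + L) with h | h
    · rw [A2 L i hi h, A2 (L + k) (i + k) (by omega) (by push_cast; omega),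
        show (i + (k : ℤ) - M - n₁) = (i - M - n₁) + k by ring, hzper]
    · rw [A3 L hL i (by omega), A3 (L + k) hLk (i + k) (by push_cast; omega)]
      congr 1
      push_cast; ring
  -- membership of the z-block lengths we use
  have hLmul : ∀ m : ℕ, z.1 ((m * k : ℕ) : ℤ) = z.1 0 := by
    intro m
    have := z_per_mul X hz m 0
    rwa [zero_add] at this
  set s : ZMod p := ∑ i ∈ Finset.range k, f (X.σ^[i] z) with hs
  set J : ℕ := M + n₁ + N with hJ
  -- one-loop recursion for the total cocycle sum
  have key3 : ∀ (L L' : ℕ) (hLm : vs L ∈ X.carrier) (hL'm : vs L' ∈ X.carrier),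
      L' = L + k → z.1 ((L : ℤ)) = z.1 0 → z.1 ((L' : ℤ)) = z.1 0 → 2 * N ≤ L →
      ∑ j ∈ Finset.range (2*M+n₁+n₂+L'), f (X.σ^[j] (⟨vs L', hL'm⟩ : X.carrier))
        = (∑ j ∈ Finset.range (2*M+n₁+n₂+L), f (X.σ^[j] (⟨vs L, hLm⟩ : X.carrier))) + s := by
    rintro L L' hLm hL'm rfl hL hLk hL2
    set P : X.carrier := ⟨vs L, hLm⟩ with hP
    set P' : X.carrier := ⟨vs (L + k), hL'm⟩ with hP'
    have hcP : ∀ (j : ℕ) (i : ℤ), (X.σ^[j] P).1 i = vs L (i + j) := by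
      intro j i; rw [shift_iter]
    have hcP' : ∀ (j : ℕ) (i : ℤ), (X.σ^[j] P').1 i = vs (L + k) (i + j) := by
      intro j i; rw [shift_iter]
    have hJle : J + k ≤ 2*M+n₁+n₂+(L+k) := by omega
    have hsplit1 : ∑ j ∈ Finset.range (2*M+n₁+n₂+(L+k)), f (X.σ^[j] P')
        = ((∑ j ∈ Finset.Ico 0 J, f (X.σ^[j] P'))
            + ∑ j ∈ Finset.Ico J (J+k), f (X.σ^[j] P'))
          + ∑ j ∈ Finset.Ico (J+k) (2*M+n₁+n₂+(L+k)), f (X.σ^[j] P') := by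
      rw [Finset.range_eq_Ico,
        ← Finset.sum_Ico_consecutive _ (Nat.zero_le (J+k)) hJle,
        ← Finset.sum_Ico_consecutive _ (Nat.zero_le J) (Nat.le_add_right J k)]
    have hsplit2 : ∑ j ∈ Finset.range (2*M+n₁+n₂+L), f (X.σ^[j] P)
        = (∑ j ∈ Finset.Ico 0 J, f (X.σ^[j] P))
          + ∑ j ∈ Finset.Ico J (2*M+n₁+n₂+L), f (X.σ^[j] P) := by
      rw [Finset.range_eq_Ico,
        ← Finset.sum_Ico_consecutive _ (Nat.zero_le J) (show J ≤ 2*M+n₁+n₂+L by omega)]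
    have hhead : ∑ j ∈ Finset.Ico 0 J, f (X.σ^[j] P')
        = ∑ j ∈ Finset.Ico 0 J, f (X.σ^[j] P) := by
      apply Finset.sum_congr rfl
      intro j hj
      rw [Finset.mem_Ico] at hj
      apply hf
      intro i hi
      rcases abs_le.mp hi with ⟨hi1, hi2⟩
      rw [hcP', hcP]
      exact R1 L (L+k) (Nat.le_add_right _ _) _ (by omega)
    have htail : ∑ j ∈ Finset.Ico (J+k) (2*M+n₁+n₂+(L+k)), f (X.σ^[j] P')
        = ∑ j ∈ Finset.Ico J (2*M+n₁+n₂+L), f (X.σ^[j] P) := by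
      rw [Finset.sum_Ico_eq_sum_range, Finset.sum_Ico_eq_sum_range]
      have hlen : 2*M+n₁+n₂+(L+k) - (J+k) = 2*M+n₁+n₂+L - J := by omega
      rw [hlen]
      apply Finset.sum_congr rfl
      intro j hj
      rw [Finset.mem_range] at hj
      apply hf
      intro i hi
      rcases abs_le.mp hi with ⟨hi1, hi2⟩
      rw [hcP', hcP]
      have e1 : (i + ((J + k + j : ℕ) : ℤ)) = (i + ((J + j : ℕ) : ℤ)) + k := by
        push_cast; ring
      rw [e1]
      exact R2 L hL hLk _ (by push_cast; omega)
    have hmid : ∑ j ∈ Finset.Ico J (J+k), f (X.σ^[j] P') = s := by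
      rw [Finset.sum_Ico_eq_sum_range]
      have hlen : J + k - J = k := by omega
      rw [hlen]
      have hterm : ∀ j ∈ Finset.range k,
          f (X.σ^[J+j] P') = f ((σE X ^ ((N : ℤ) + j)) z) := by
        intro j hj
        rw [Finset.mem_range] at hj
        apply hf
        intro i hi
        rcases abs_le.mp hi with ⟨hi1, hi2⟩
        rw [hcP', zpow_coord]
        rw [A2 (L+k) (i + ((J + j : ℕ) : ℤ)) (by push_cast; omega) (by push_cast; omega)]
        have e2 : i + ((J + j : ℕ) : ℤ) - M - n₁ = i + ((N : ℤ) + j) := by push_cast; omega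
        rw [e2]
      rw [Finset.sum_congr rfl hterm, hs]
      exact sum_consec X f hz (N : ℤ)
    rw [hsplit1, hsplit2, hhead, hmid, htail]
    ring
  -- iterate the recursion
  have key4 : ∀ r : ℕ,
      ∑ j ∈ Finset.range (2*M+n₁+n₂+(2*N+r)*k),
          f (X.σ^[j] (⟨vs ((2*N+r)*k), memb _ (hLmul (2*N+r))⟩ : X.carrier))
        = (∑ j ∈ Finset.range (2*M+n₁+n₂+(2*N)*k),
            f (X.σ^[j] (⟨vs ((2*N)*k), memb _ (hLmul (2*N))⟩ : X.carrier)))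
          + (r : ZMod p) * s := by
    intro r
    induction r with
    | zero => simp
    | succ r ih =>
      have e : (2*N + (r+1)) * k = (2*N + r) * k + k := by ring
      have h3 := key3 ((2*N+r)*k) ((2*N+(r+1))*k)
        (memb _ (hLmul (2*N+r))) (memb _ (hLmul (2*N+(r+1)))) e
        (hLmul (2*N+r)) (hLmul (2*N+(r+1)))
        (le_trans (Nat.le_add_right (2*N) r) (Nat.le_mul_of_pos_right _ hk))
      rw [h3, ih]
      push_cast
      ring
  -- choose the number of loops
  haveI : NeZero p := ⟨hp.ne_zero⟩
  set T₀ : ZMod p := ∑ j ∈ Finset.range (2*M+n₁+n₂+(2*N)*k),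
      f (X.σ^[j] (⟨vs ((2*N)*k), memb _ (hLmul (2*N))⟩ : X.carrier)) with hT₀
  set r : ℕ := ((cV - cU - T₀) * s⁻¹).val with hr
  have hrcast : ((r : ℕ) : ZMod p) = (cV - cU - T₀) * s⁻¹ :=
    ZMod.natCast_rightInverse _
  obtain ⟨L, hLz, hT⟩ : ∃ L : ℕ, ∃ hLz : z.1 ((L : ℤ)) = z.1 0,
      ∑ j ∈ Finset.range (2*M+n₁+n₂+L),
          f (X.σ^[j] (⟨vs L, memb _ hLz⟩ : X.carrier)) = cV - cU := by
    refine ⟨(2*N+r)*k, hLmul (2*N+r), ?_⟩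
    rw [key4 r, hrcast]
    have hs0 : s ≠ 0 := hsum
    field_simp
    ring
  have hPU : ((⟨vs L, memb _ hLz⟩ : X.carrier), cU) ∈ U := by
    apply hMU
    intro i hi
    rcases abs_le.mp hi with ⟨hi1, hi2⟩
    show vs L i = xU.1 i
    rw [A0 L i (by omega), h11' (i - M) (by omega),
      show (i - (M : ℤ) + M) = i from by ring]
  have hPV : (X.σ^[2*M+n₁+n₂+L] (⟨vs L, memb _ hLz⟩ : X.carrier), cV) ∈ V := by
    apply hMV
    intro j hj
    rcases abs_le.mp hj with ⟨hj1, hj2⟩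
    rw [shift_iter]
    show vs L (j + ((2*M+n₁+n₂+L : ℕ) : ℤ)) = xV.1 j
    rw [A3 L hLz (j + ((2*M+n₁+n₂+L : ℕ) : ℤ)) (by push_cast; omega),
      h22' _ (by push_cast; omega)]
    congr 1
    push_cast
    ring
  refine ⟨2*M+n₁+n₂+L, ⟨(X.σ^[2*M+n₁+n₂+L] (⟨vs L, memb _ hLz⟩ : X.carrier), cV),
    ⟨((⟨vs L, memb _ hLz⟩ : X.carrier), cU), hPU, ?_⟩, hPV⟩⟩
  rw [skew_iterate, hT]
  rw [show cU + (cV - cU) = cV from by ring]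

end SkewAux
namespace SkewAux
variable {A : Type*} [TopologicalSpace A]

/-- The cocycle sums `∑_{0 ≤ j < n} f(σ^j x)` (with the natural signed convention for
negative `n`). -/
def cocS (X : Subshift A) {p : ℕ} (f : X.carrier → ZMod p) (x : X.carrier) (n : ℤ) : ZMod p :=
  (∑ j ∈ Finset.range n.toNat, f ((σE X ^ (j : ℤ)) x))
    - ∑ j ∈ Finset.range (-n).toNat, f ((σE X ^ (-(j : ℤ) - 1)) x)

lemma cocS_zero (X : Subshift A) {p : ℕ} (f : X.carrier → ZMod p) (x : X.carrier) :
    cocS X f x 0 = 0 := by simp [cocS]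

lemma cocS_succ (X : Subshift A) {p : ℕ} (f : X.carrier → ZMod p) (x : X.carrier) (n : ℤ) :
    cocS X f x (n + 1) = cocS X f x n + f ((σE X ^ n) x) := by
  rcases le_or_gt 0 n with hn | hn
  · have h1 : (n + 1).toNat = n.toNat + 1 := by omega
    have h2 : (-(n + 1)).toNat = 0 := by omega
    have h3 : (-n).toNat = 0 := by omega
    simp only [cocS, h1, h2, h3, Finset.range_zero, Finset.sum_empty, sub_zero,
      Finset.sum_range_succ]
    rw [Int.toNat_of_nonneg hn]
  · have h1 : n.toNat = 0 := by omega
    have h2 : (n + 1).toNat = 0 := by omega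
    have h3 : (-n).toNat = (-(n + 1)).toNat + 1 := by omega
    have h4 : (-((-(n + 1)).toNat : ℤ) - 1) = n := by omega
    simp only [cocS, h1, h2, h3, Finset.range_zero, Finset.sum_empty, zero_sub,
      Finset.sum_range_succ, h4]
    ring

lemma cocS_shift (X : Subshift A) {p : ℕ} (f : X.carrier → ZMod p) (x : X.carrier) (i : ℤ) :
    cocS X f x (i + 1) = cocS X f (X.σ x) i + f x := by
  have hcomm : ∀ j : ℤ, (σE X ^ j) (X.σ x) = (σE X ^ (j + 1)) x := by
    intro j
    rw [zpow_add_one]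
    rfl
  induction i using Int.induction_on with
  | zero =>
    have := cocS_succ X f x 0
    simp only [zero_add] at this ⊢
    rw [this, cocS_zero, cocS_zero, zpow_zero]
    simp
  | succ i ih =>
    have e1 := cocS_succ X f x (i + 1)
    have e2 := cocS_succ X f (X.σ x) i
    rw [hcomm i] at e2
    linear_combination e1 - e2 + ih
  | pred i ih =>
    have e1 := cocS_succ X f x (-i)
    have e2 := cocS_succ X f (X.σ x) (-i - 1)
    rw [hcomm (-i - 1), show (-(i:ℤ) - 1 + 1) = -i from by ring] at e2
    rw [show (-(i:ℤ) - 1 + 1) = -i from by ring]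
    rw [show (-(i:ℤ) + 1) = (-i) + 1 from by ring] at ih
    linear_combination ih - e1 + e2

/-- The conjugacy map to the skew-product SFT. -/
def hmap (X : Subshift A) {p : ℕ} (f : X.carrier → ZMod p)
    (q : X.carrier × ZMod p) : ℤ → A × ZMod p :=
  fun i => (q.1.1 i, q.2 + cocS X f q.1 i)

lemma hmap_shift (X : Subshift A) {p : ℕ} (f : X.carrier → ZMod p)
    (q : X.carrier × ZMod p) :
    hmap X f (X.σ q.1, q.2 + f q.1) = shiftMap _ (hmap X f q) := by
  funext i
  show (_, _) = (_, _)
  have h1 : (X.σ q.1).1 i = q.1.1 (i + 1) := rfl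
  have h2 := cocS_shift X f q.1 i
  rw [Prod.mk.injEq]
  constructor
  · exact h1
  · show q.2 + f q.1 + cocS X f (X.σ q.1) i = q.2 + cocS X f q.1 (i + 1)
    rw [h2]; ring

lemma hmap_inj (X : Subshift A) {p : ℕ} (f : X.carrier → ZMod p) :
    Function.Injective (hmap X f) := by
  rintro ⟨x, c⟩ ⟨y, d⟩ hxy
  have hfst : ∀ i : ℤ, x.1 i = y.1 i := fun i => (Prod.ext_iff.mp (congrFun hxy i)).1
  have hsnd := (Prod.ext_iff.mp (congrFun hxy 0)).2
  simp only [hmap, cocS_zero, add_zero] at hsnd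
  have : x = y := Subtype.ext (funext hfst)
  subst this
  simp only [Prod.mk.injEq, true_and]
  exact hsnd

variable [DiscreteTopology A]

lemma hmap_continuous (X : Subshift A) {p : ℕ} [TopologicalSpace (ZMod p)]
    [DiscreteTopology (ZMod p)] (f : X.carrier → ZMod p) (hfc : Continuous f) :
    Continuous (hmap X f) := by
  apply continuous_pi
  intro i
  apply Continuous.prodMk
  · exact (continuous_apply i).comp (continuous_subtype_val.comp continuous_fst)
  · apply Continuous.add continuous_snd
    have hcoc : Continuous fun x : X.carrier => cocS X f x i := by
      apply Continuous.sub
      · exact continuous_finset_sum _ fun j _ => hfc.comp (continuous_σE_zpow X _)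
      · exact continuous_finset_sum _ fun j _ => hfc.comp (continuous_σE_zpow X _)
    exact hcoc.comp continuous_fst

end SkewAux
namespace SkewAux
variable {A : Type*} [TopologicalSpace A]

/-- The window rule for the skew-product SFT. -/
def WY (X : Subshift A) (W : Set (A × A)) {p : ℕ} (N : ℕ) (f : X.carrier → ZMod p) :
    Set (Fin (2*N+2) → A × ZMod p) :=
  {w | ((w ⟨0, by omega⟩).1, (w ⟨1, by omega⟩).1) ∈ W ∧
    ∀ u : X.carrier,
      (∀ m : ℕ, (hm : m ≤ 2*N) → u.1 ((m : ℤ) - N) = (w ⟨m, by omega⟩).1) →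
      (w ⟨N+1, by omega⟩).2 = (w ⟨N, by omega⟩).2 + f u}

lemma range_hmap (X : Subshift A) {W : Set (A × A)}
    (hW : X.carrier = {x | ∀ i : ℤ, (x i, x (i + 1)) ∈ W})
    {p : ℕ} (N : ℕ) (f : X.carrier → ZMod p)
    (hf : ∀ x y : X.carrier, (∀ i : ℤ, |i| ≤ (N : ℤ) → x.1 i = y.1 i) → f x = f y) :
    Set.range (hmap X f)
      = {y : ℤ → A × ZMod p |
          ∀ i : ℤ, (fun k : Fin (2*N+2) => y (i + (k.val : ℤ))) ∈ WY X W N f} := by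
  have pairx : ∀ u : X.carrier, ∀ j : ℤ, (u.1 j, u.1 (j + 1)) ∈ W := by
    intro u j
    exact (Set.ext_iff.mp hW u.1).mp u.2 j
  ext y
  constructor
  · rintro ⟨⟨x, c⟩, rfl⟩
    intro i
    constructor
    · show ((x.1 (i + ((0:ℕ) : ℤ)), _).1, (x.1 (i + ((1:ℕ) : ℤ)), _).1) ∈ W
      simp only [Nat.cast_zero, add_zero, Nat.cast_one]
      exact pairx x i
    · intro u hu
      have hfu : f u = f ((σE X ^ (i + N)) x) := by
        apply hf
        intro j hj
        rcases abs_le.mp hj with ⟨hj1, hj2⟩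
        have h1 := hu (j + N).toNat (by omega)
        have h1b : u.1 ((((j + N).toNat : ℕ) : ℤ) - N)
            = x.1 (i + (((j + N).toNat : ℕ) : ℤ)) := h1
        have hjN : (((j + N).toNat : ℕ) : ℤ) = j + N := by omega
        rw [hjN, show (j + (N:ℤ) - N) = j from by ring] at h1b
        rw [zpow_coord, h1b]
        congr 1
        ring
      show c + cocS X f x (i + ((N+1 : ℕ) : ℤ)) = c + cocS X f x (i + ((N:ℕ) : ℤ)) + f u
      rw [hfu, show (i + ((N+1 : ℕ) : ℤ)) = (i + (N:ℤ)) + 1 from by push_cast; ring,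
        cocS_succ]
      push_cast
      ring
  · intro hy
    set x : ℤ → A := fun j => (y j).1 with hxdef
    have hx : x ∈ X.carrier := by
      rw [hW]
      intro i
      have h1 := (hy i).1
      have h1b : ((y (i + ((0:ℕ) : ℤ))).1, (y (i + ((1:ℕ) : ℤ))).1) ∈ W := h1
      have e0 : i + ((0:ℕ) : ℤ) = i := by push_cast; ring
      have e1 : i + ((1:ℕ) : ℤ) = i + 1 := by push_cast; ring
      rw [e0, e1] at h1b
      exact h1b
    have hrec : ∀ i : ℤ, (y (i+1)).2 = (y i).2 + f ((σE X ^ i) (⟨x, hx⟩ : X.carrier)) := by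
      intro i
      have h2 := (hy (i - N)).2 ((σE X ^ i) (⟨x, hx⟩ : X.carrier)) ?_
      · have h2b : (y ((i - N) + ((N+1 : ℕ) : ℤ))).2
            = (y ((i - N) + ((N : ℕ) : ℤ))).2 + f ((σE X ^ i) (⟨x, hx⟩ : X.carrier)) := h2
        have eN1 : (i - N) + ((N+1 : ℕ) : ℤ) = i + 1 := by push_cast; ring
        have eN : (i - N) + ((N : ℕ) : ℤ) = i := by push_cast; ring
        rw [eN1, eN] at h2b
        exact h2b
      · intro m hm
        rw [zpow_coord]
        show x ((m : ℤ) - N + i) = x (i - N + m)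
        congr 1
        ring
    have hcl : ∀ i : ℤ, (y i).2 = (y 0).2 + cocS X f (⟨x, hx⟩ : X.carrier) i := by
      intro i
      induction i using Int.induction_on with
      | zero => rw [cocS_zero, add_zero]
      | succ i ih => rw [hrec i, ih, cocS_succ]; ring
      | pred i ih =>
        have e1 := hrec (-(i:ℤ) - 1)
        rw [show (-(i:ℤ) - 1 + 1) = -i from by ring] at e1
        have e2 := cocS_succ X f (⟨x, hx⟩ : X.carrier) (-(i:ℤ) - 1)
        rw [show (-(i:ℤ) - 1 + 1) = -i from by ring] at e2
        linear_combination ih - e1 + e2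
    refine ⟨((⟨x, hx⟩ : X.carrier), (y 0).2), ?_⟩
    funext i
    show ((x i, (y 0).2 + cocS X f (⟨x, hx⟩ : X.carrier) i) : A × ZMod p) = y i
    rw [← hcl i]

end SkewAux
/-- Skew products with prescribed return sums: let `X` be an irreducible 1-step SFT,
`p` a prime, and `f : X → 𝔽_p` a map depending only on the coordinates `x_{[-N,N]}`.
If there is a periodic point `z` of least period `k` with `∑_{i<k} f(σ^i z) ≠ 0`, then
the skew product `σ_f(x, c) = (σ x, c + f x)` on `X × 𝔽_p` is topologically transitive,
and is topologically conjugate to an irreducible SFT. -/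
theorem stmt_16 {A : Type*} [TopologicalSpace A] [DiscreteTopology A] [Finite A]
    (X : Subshift A) (hXirr : X.Irreducible)
    (hX1 : ∃ W : Set (A × A), X.carrier = {x | ∀ i : ℤ, (x i, x (i + 1)) ∈ W})
    (p : ℕ) (hp : p.Prime) [TopologicalSpace (ZMod p)] [DiscreteTopology (ZMod p)]
    (N : ℕ) (f : X.carrier → ZMod p)
    (hf : ∀ x y : X.carrier, (∀ i : ℤ, |i| ≤ (N : ℤ) → x.1 i = y.1 i) → f x = f y)
    (z : X.carrier) (k : ℕ) (hk : 1 ≤ k) (hz : X.σ^[k] z = z)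
    (hzmin : ∀ j : ℕ, 0 < j → j < k → X.σ^[j] z ≠ z)
    (hsum : ∑ i ∈ Finset.range k, f (X.σ^[i] z) ≠ 0) :
    (∀ U V : Set (X.carrier × ZMod p), IsOpen U → IsOpen V → U.Nonempty → V.Nonempty →
      ∃ n : ℕ,
        (((fun q : X.carrier × ZMod p => (X.σ q.1, q.2 + f q.1))^[n] '' U) ∩ V).Nonempty) ∧
    ∃ Y : Subshift (A × ZMod p), Y.IsSFT ∧ Y.Irreducible ∧
      ∃ h : (X.carrier × ZMod p) ≃ Y.carrier, Continuous h ∧ Continuous h.symm ∧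
        ∀ q : X.carrier × ZMod p, h (X.σ q.1, q.2 + f q.1) = Y.σ (h q) := by
  obtain ⟨W, hW⟩ := hX1
  have part1 := SkewAux.main_trans X hXirr hW hp N f hf z k hk hz hsum
  refine ⟨part1, ?_⟩
  haveI : NeZero p := ⟨hp.ne_zero⟩
  haveI : CompactSpace X.carrier := isCompact_iff_compactSpace.mp (X.isClosed'.isCompact)
  have hfc : Continuous f := SkewAux.continuous_local X N f hf
  have hcont : Continuous (SkewAux.hmap X f) := SkewAux.hmap_continuous X f hfc
  have hinj : Function.Injective (SkewAux.hmap X f) := SkewAux.hmap_inj X f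
  have hshift : ∀ q : X.carrier × ZMod p,
      SkewAux.hmap X f (X.σ q.1, q.2 + f q.1) = shiftMap _ (SkewAux.hmap X f q) :=
    SkewAux.hmap_shift X f
  let Y : Subshift (A × ZMod p) :=
    { carrier := Set.range (SkewAux.hmap X f)
      isClosed' := (isCompact_range hcont).isClosed
      shift_mem' := by
        rintro y ⟨q, rfl⟩
        exact ⟨(X.σ q.1, q.2 + f q.1), hshift q⟩
      shift_surjOn' := by
        rintro y ⟨q, rfl⟩
        refine ⟨SkewAux.hmap X f
          (SkewAux.σinv X q.1, q.2 - f (SkewAux.σinv X q.1)), ⟨_, rfl⟩, ?_⟩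
        rw [← hshift]
        have h1 : X.σ (SkewAux.σinv X q.1) = q.1 := (SkewAux.σE X).right_inv q.1
        rw [h1, sub_add_cancel] }
  let h : (X.carrier × ZMod p) ≃ Y.carrier := Equiv.ofInjective _ hinj
  have hcomm : ∀ q : X.carrier × ZMod p, h (X.σ q.1, q.2 + f q.1) = Y.σ (h q) := by
    intro q
    apply Subtype.ext
    exact hshift q
  have hcont_h : Continuous h := Continuous.subtype_mk hcont _
  have hcont_symm : Continuous h.symm :=
    (Continuous.homeoOfEquivCompactToT2 (f := h) hcont_h).symm.continuous
  have hYiter : ∀ (n : ℕ) (q : X.carrier × ZMod p),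
      h ((fun q : X.carrier × ZMod p => (X.σ q.1, q.2 + f q.1))^[n] q)
        = Y.σ^[n] (h q) := by
    intro n
    induction n with
    | zero => intro q; simp
    | succ n ih =>
      intro q
      rw [Function.iterate_succ_apply', Function.iterate_succ_apply', ← ih]
      exact hcomm _
  have hYirr : Y.Irreducible := by
    intro UY VY hUYo hVYo hUYne hVYne
    have hUne : (h ⁻¹' UY).Nonempty := by
      obtain ⟨yU, hyU⟩ := hUYne
      refine ⟨h.symm yU, ?_⟩
      show h (h.symm yU) ∈ UY
      rw [Equiv.apply_symm_apply]
      exact hyU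
    have hVne : (h ⁻¹' VY).Nonempty := by
      obtain ⟨yV, hyV⟩ := hVYne
      refine ⟨h.symm yV, ?_⟩
      show h (h.symm yV) ∈ VY
      rw [Equiv.apply_symm_apply]
      exact hyV
    obtain ⟨n, w, ⟨q, hqU, hqit⟩, hwV⟩ :=
      part1 (h ⁻¹' UY) (h ⁻¹' VY) (hUYo.preimage hcont_h) (hVYo.preimage hcont_h)
        hUne hVne
    exact ⟨n, h w, ⟨h q, hqU, by rw [← hYiter n q, hqit]⟩, hwV⟩
  exact ⟨Y, ⟨2*N+2, SkewAux.WY X W N f, SkewAux.range_hmap X hW N f hf⟩,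
    hYirr, h, hcont_h, hcont_symm, hcomm⟩
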